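/- Let λ_max ≥ λ₀ > λ > 0. Then: (i) θ*_λ ∈ A and moreover ‖θ*_λ − θ₀‖₂ < r (strict inequality), so A contains a point satisfying the ball constraint strictly (Slater's condition for the problem of optimizing a linear functional over A); and (ii) for every vector v ∈ ℝ^m, the minimum of θ ↦ ⟨θ, v⟩ over A is attained at some point of A. -/

import Mathlib

/-!
Put `s = λ/λ₀`. The point `s θ₀` is feasible for `λ`, and `r²` is `m/2` times the Bregman
divergence `D_g(s θ₀, θ₀)`. Since `g(θ*_λ) ≤ g(s θ₀)` and, by first-order optimality of `θ₀` on
`F_{λ₀}` in the direction `θ*_λ / s - θ₀`, `⟨∇g(θ₀), θ*_λ - s θ₀⟩ ≥ 0`, we get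
`D_g(θ*_λ, θ₀) ≤ D_g(s θ₀, θ₀)`. The strict Pinsker inequality `2 (y - a)² < D_{-H}(y, a)` for the
binary entropy `H` (strict convexity of `-H - 2t²`, whose second derivative vanishes only at `1/2`)
then gives `‖θ*_λ - θ₀‖² < r²`, because `⟨θ*_λ, x̄*⟩ ≤ mλ < mλ₀ = ⟨θ₀, x̄*⟩` forces `θ*_λ ≠ θ₀`.
Part (ii) holds because `A` is compact, and nonempty by (i).
-/

/-- The dual objective `g(θ) = (1/m) Σ_i [θ_i log θ_i + (1−θ_i) log(1−θ_i)]`. -/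
noncomputable def g (m : ℕ) (θ : Fin m → ℝ) : ℝ :=
  (1 / (m : ℝ)) * ∑ i, (θ i * Real.log (θ i) + (1 - θ i) * Real.log (1 - θ i))

/-- The gradient of `g`, componentwise `(1/m) log(θ_i/(1−θ_i))`. -/
noncomputable def gradg (m : ℕ) (θ : Fin m → ℝ) : Fin m → ℝ :=
  fun i => (1 / (m : ℝ)) * Real.log (θ i / (1 - θ i))
/-- The dual feasible set `F_λ`: componentwise in `(0,1)`, `|⟨θ, x̄^j⟩| ≤ mλ` for all
columns `x̄^j = X j`, and `⟨θ, b⟩ = 0`. -/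
def Feas (m p : ℕ) (X : Fin p → Fin m → ℝ) (b : Fin m → ℝ) (lam : ℝ) :
    Set (Fin m → ℝ) :=
  {θ | (∀ i, 0 < θ i ∧ θ i < 1) ∧ (∀ j, |∑ i, θ i * X j i| ≤ (m : ℝ) * lam) ∧
    ∑ i, θ i * b i = 0}
open scoped Classical in
/-- `m⁺ = #{i : b_i = 1}`. -/
noncomputable def mPlus (m : ℕ) (b : Fin m → ℝ) : ℕ :=
  (Finset.univ.filter (fun i => b i = 1)).card

open scoped Classical in
/-- `m⁻ = #{i : b_i = −1}`. -/
noncomputable def mMinus (m : ℕ) (b : Fin m → ℝ) : ℕ :=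
  (Finset.univ.filter (fun i => b i = -1)).card

open scoped Classical in
/-- `θ_max`, with `(θ_max)_i = m⁻/m` if `b_i = 1` and `m⁺/m` if `b_i = −1`. -/
noncomputable def thetaMax (m : ℕ) (b : Fin m → ℝ) : Fin m → ℝ :=
  fun i => if b i = 1 then (mMinus m b : ℝ) / m else (mPlus m b : ℝ) / m

/-- `λ_max = (1/m) max_j |⟨θ_max, x̄^j⟩|`. -/
noncomputable def lamMax (m p : ℕ) (X : Fin p → Fin m → ℝ) (b : Fin m → ℝ) : ℝ :=
  (1 / (m : ℝ)) * ⨆ j : Fin p, |∑ i, thetaMax m b i * X j i|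
/-- `P`, the orthogonal projection onto the orthogonal complement of `b`:
`Pv = v − (⟨v,b⟩/‖b‖₂²) b`. -/
noncomputable def Pb (m : ℕ) (b : Fin m → ℝ) (v : Fin m → ℝ) : Fin m → ℝ :=
  fun i => v i - ((∑ k, v k * b k) / (∑ k, (b k) ^ 2)) * b i

open Real Finset Set Topology

theorem StrictConvexOn.add_mul_sub_lt_of_hasDerivAt {S : Set ℝ} {f : ℝ → ℝ} {f' x y : ℝ}
    (hf : StrictConvexOn ℝ S f) (hx : x ∈ S) (hy : y ∈ S) (hyx : y ≠ x)
    (hf' : HasDerivAt f f' x) : f x + f' * (y - x) < f y := by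
  rcases hyx.lt_or_gt with hlt | hlt
  · have := hf.slope_lt_of_hasDerivAt hy hx hlt hf'
    rw [slope_def_field, div_lt_iff₀ (by linarith)] at this
    nlinarith
  · have := hf.lt_slope_of_hasDerivAt hx hy hlt hf'
    rw [slope_def_field, lt_div_iff₀ (by linarith)] at this
    nlinarith

theorem strictMonoOn_log_sub_log_one_sub_sub_four_mul :
    StrictMonoOn (fun t => log t - log (1 - t) - 4 * t) (Ioo 0 1) := by
  have hderiv : ∀ t ∈ Ioo (0 : ℝ) 1,
      HasDerivAt (fun t => log t - log (1 - t) - 4 * t) (t⁻¹ + (1 - t)⁻¹ - 4) t := by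
    rintro t ⟨ht₀, ht₁⟩
    have h₁ := ((hasDerivAt_id' t).const_sub 1).log (by linarith)
    exact (((hasDerivAt_log ht₀.ne').fun_sub h₁).fun_sub
      ((hasDerivAt_id' t).const_mul 4)).congr_deriv (by ring)
  have hpos : ∀ t ∈ Ioo (0 : ℝ) 1, t ≠ 1 / 2 → 0 < t⁻¹ + (1 - t)⁻¹ - 4 := by
    rintro t ⟨ht₀, ht₁⟩ ht
    have h : t⁻¹ + (1 - t)⁻¹ - 4 = (1 - 2 * t) ^ 2 / (t * (1 - t)) := by
      field_simp; ring
    rw [h]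
    have : 1 - 2 * t ≠ 0 := fun h' => ht (by linarith)
    have : 0 < 1 - t := by linarith
    positivity
  have hmono : ∀ D ⊆ Ioo (0 : ℝ) 1, Convex ℝ D → (1 / 2 : ℝ) ∉ interior D →
      StrictMonoOn (fun t => log t - log (1 - t) - 4 * t) D := by
    intro D hD hconv hhalf
    refine strictMonoOn_of_deriv_pos hconv
      (fun t ht => (hderiv t (hD ht)).continuousAt.continuousWithinAt) fun t ht => ?_
    rw [(hderiv t (hD (interior_subset ht))).deriv]
    exact hpos t (hD (interior_subset ht)) (ne_of_mem_of_not_mem ht hhalf)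
  rw [← Ioc_union_Ico_eq_Ioo (by norm_num : (0 : ℝ) < 1 / 2) (by norm_num)]
  refine StrictMonoOn.union
    (hmono _ (Ioc_subset_Ioo_right (by norm_num)) (convex_Ioc _ _) (by simp))
    (hmono _ (Ico_subset_Ioo_left (by norm_num)) (convex_Ico _ _) (by simp))
    ⟨⟨by norm_num, le_rfl⟩, fun _ h => h.2⟩ ⟨⟨le_rfl, by norm_num⟩, fun _ h => h.1⟩

theorem hasDerivAt_neg_binEntropy_sub_two_mul_sq {t : ℝ} (ht : t ∈ Ioo (0 : ℝ) 1) :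
    HasDerivAt (fun t => -binEntropy t - 2 * t ^ 2) (log t - log (1 - t) - 4 * t) t :=
  ((hasDerivAt_binEntropy ht.1.ne' (by linarith [ht.2])).fun_neg.fun_sub
    ((hasDerivAt_pow 2 t).const_mul 2)).congr_deriv (by ring)

theorem strictConvexOn_neg_binEntropy_sub_two_mul_sq :
    StrictConvexOn ℝ (Ioo 0 1) (fun t => -binEntropy t - 2 * t ^ 2) := by
  refine StrictMonoOn.strictConvexOn_of_deriv (convex_Ioo 0 1)
    (fun t ht => (hasDerivAt_neg_binEntropy_sub_two_mul_sq ht).continuousAt.continuousWithinAt) ?_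
  rw [interior_Ioo]
  exact strictMonoOn_log_sub_log_one_sub_sub_four_mul.congr
    fun t ht => (hasDerivAt_neg_binEntropy_sub_two_mul_sq ht).deriv.symm

theorem two_mul_sq_sub_lt_binEntropy_sub_binEntropy {a y : ℝ} (ha : a ∈ Ioo (0 : ℝ) 1)
    (hy : y ∈ Ioo (0 : ℝ) 1) (hya : y ≠ a) :
    2 * (y - a) ^ 2 < binEntropy a - binEntropy y - (log a - log (1 - a)) * (y - a) := by
  have := strictConvexOn_neg_binEntropy_sub_two_mul_sq.add_mul_sub_lt_of_hasDerivAt ha hy hya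
    (hasDerivAt_neg_binEntropy_sub_two_mul_sq ha)
  linarith

theorem g_eq_sum_neg_binEntropy (m : ℕ) (θ : Fin m → ℝ) :
    g m θ = (1 / m) * ∑ i, -binEntropy (θ i) := by
  simp only [g, binEntropy, log_inv]
  congr 1
  exact sum_congr rfl fun i _ => by ring

theorem gradg_eq_log_sub_log {m : ℕ} {θ : Fin m → ℝ} {i : Fin m} (hi : θ i ∈ Ioo (0 : ℝ) 1) :
    gradg m θ i = (1 / m) * (log (θ i) - log (1 - θ i)) := by
  rw [gradg, log_div hi.1.ne' (by linarith [hi.2])]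

theorem hasFDerivAt_g {m : ℕ} {θ : Fin m → ℝ} (hθ : θ ∈ univ.pi fun _ => Ioo (0 : ℝ) 1) :
    HasFDerivAt (g m)
      (∑ i, gradg m θ i • ContinuousLinearMap.proj (R := ℝ) (φ := fun _ : Fin m => ℝ) i) θ := by
  rw [show g m = _ from funext (g_eq_sum_neg_binEntropy m)]
  have hterm (i : Fin m) : HasFDerivAt (fun θ : Fin m → ℝ => -binEntropy (θ i))
      ((log (θ i) - log (1 - θ i)) •
        ContinuousLinearMap.proj (R := ℝ) (φ := fun _ : Fin m => ℝ) i) θ := by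
    obtain ⟨h₀, h₁⟩ := hθ i trivial
    have hd : HasFDerivAt (fun θ : Fin m → ℝ => binEntropy (θ i))
        ((log (1 - θ i) - log (θ i)) •
          ContinuousLinearMap.proj (R := ℝ) (φ := fun _ : Fin m => ℝ) i) θ :=
      (hasDerivAt_binEntropy h₀.ne' (by linarith)).comp_hasFDerivAt
        (f := fun θ : Fin m → ℝ => θ i) θ (hasFDerivAt_apply i θ)
    exact hd.neg.congr_fderiv (by ext; simp; ring)
  refine ((HasFDerivAt.fun_sum fun i _ => hterm i).const_mul (1 / (m : ℝ))).congr_fderiv ?_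
  ext v
  simp [gradg_eq_log_sub_log (hθ _ trivial), mul_sum, mul_assoc]

noncomputable def gBregman (m : ℕ) (θ η : Fin m → ℝ) : ℝ :=
  g m θ - g m η - ∑ i, gradg m η i * (θ i - η i)

theorem two_mul_sum_sq_sub_lt_mul_gBregman {m : ℕ} {θ η : Fin m → ℝ}
    (hθ : θ ∈ univ.pi fun _ => Ioo (0 : ℝ) 1) (hη : η ∈ univ.pi fun _ => Ioo (0 : ℝ) 1)
    (hne : θ ≠ η) :
    2 * ∑ i, (θ i - η i) ^ 2 < m * gBregman m θ η := by
  obtain ⟨i₀, hi₀⟩ := Function.ne_iff.1 hne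
  have hm : (m : ℝ) ≠ 0 := by exact_mod_cast i₀.pos.ne'
  have hsum : m * gBregman m θ η = ∑ i, (binEntropy (η i) - binEntropy (θ i)
      - (log (η i) - log (1 - η i)) * (θ i - η i)) := by
    simp only [gBregman, g_eq_sum_neg_binEntropy, gradg_eq_log_sub_log (hη _ trivial),
      sum_sub_distrib, sum_neg_distrib, mul_assoc, ← mul_sum]
    field_simp
    ring
  rw [hsum, mul_sum]
  refine sum_lt_sum (fun i _ => ?_) ⟨i₀, mem_univ _,
    two_mul_sq_sub_lt_binEntropy_sub_binEntropy (hη i₀ trivial) (hθ i₀ trivial) hi₀⟩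
  rcases eq_or_ne (θ i) (η i) with h | h
  · simp [h]
  · exact (two_mul_sq_sub_lt_binEntropy_sub_binEntropy (hη i trivial) (hθ i trivial) h).le

theorem gBregman_le_gBregman {m : ℕ} {θ θ' η : Fin m → ℝ} (hg : g m θ ≤ g m θ')
    (hgrad : 0 ≤ ∑ i, gradg m η i * (θ i - θ' i)) : gBregman m θ η ≤ gBregman m θ' η := by
  have hsplit : ∑ i, gradg m η i * (θ i - η i)
      = ∑ i, gradg m η i * (θ i - θ' i) + ∑ i, gradg m η i * (θ' i - η i) := by
    rw [← sum_add_distrib]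
    exact sum_congr rfl fun i _ => by ring
  simp only [gBregman, hsplit]
  linarith

theorem gBregman_smul_self (m : ℕ) (s : ℝ) (θ : Fin m → ℝ) :
    gBregman m (fun i => s * θ i) θ
      = g m (fun i => s * θ i) - g m θ + (1 - s) * ∑ i, gradg m θ i * θ i := by
  have hlin : ∑ i, gradg m θ i * (s * θ i - θ i) = -((1 - s) * ∑ i, gradg m θ i * θ i) := by
    rw [mul_sum, ← sum_neg_distrib]
    exact sum_congr rfl fun i _ => by ring
  rw [gBregman, hlin]
  ring

theorem IsMinOn.hasFDerivAt_nonneg_of_segment_subset {E : Type*} [NormedAddCommGroup E]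
    [NormedSpace ℝ E] {f : E → ℝ} {f' : E →L[ℝ] ℝ} {U K : Set E} {a y : E}
    (hmin : IsMinOn f (U ∩ K) a) (hU : U ∈ 𝓝 a) (hf : HasFDerivAt f f' a)
    (hK : segment ℝ a y ⊆ K) : 0 ≤ f' (y - a) := by
  have hloc : IsLocalMinOn f K a := by
    have := hmin.localize
    rwa [IsLocalMinOn, nhdsWithin_inter_of_mem (mem_nhdsWithin_of_mem_nhds hU)] at this
  exact hloc.hasFDerivWithinAt_nonneg hf.hasFDerivWithinAt
    (sub_mem_posTangentConeAt_of_segment_subset hK)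

def FeasLin (m p : ℕ) (X : Fin p → Fin m → ℝ) (b : Fin m → ℝ) (lam : ℝ) : Set (Fin m → ℝ) :=
  {θ | (∀ j, |∑ i, θ i * X j i| ≤ (m : ℝ) * lam) ∧ ∑ i, θ i * b i = 0}

section FeasLin

variable {m p : ℕ} {X : Fin p → Fin m → ℝ} {b : Fin m → ℝ} {lam : ℝ}

theorem Feas_eq_pi_inter_FeasLin :
    Feas m p X b lam = (univ.pi fun _ => Ioo (0 : ℝ) 1) ∩ FeasLin m p X b lam := by
  ext θ
  simp [Feas, FeasLin]

theorem convex_FeasLin : Convex ℝ (FeasLin m p X b lam) := by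
  intro θ hθ η hη a c ha hc hac
  have hlin (w : Fin m → ℝ) : ∑ i, (a • θ + c • η) i * w i
      = a * ∑ i, θ i * w i + c * ∑ i, η i * w i := by
    simp only [Pi.add_apply, Pi.smul_apply, smul_eq_mul, mul_sum, ← sum_add_distrib]
    exact sum_congr rfl fun i _ => by ring
  refine ⟨fun j => ?_, by rw [hlin, hθ.2, hη.2]; ring⟩
  calc |∑ i, (a • θ + c • η) i * X j i|
      ≤ a * |∑ i, θ i * X j i| + c * |∑ i, η i * X j i| := by
        rw [hlin]
        refine (abs_add_le _ _).trans_eq ?_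
        rw [abs_mul, abs_mul, abs_of_nonneg ha, abs_of_nonneg hc]
    _ ≤ a * (m * lam) + c * (m * lam) := by gcongr <;> [exact hθ.1 j; exact hη.1 j]
    _ = m * lam := by rw [← add_mul, hac, one_mul]

theorem smul_mem_FeasLin {c : ℝ} (hc : 0 ≤ c) {θ : Fin m → ℝ} (hθ : θ ∈ FeasLin m p X b lam) :
    (fun i => c * θ i) ∈ FeasLin m p X b (c * lam) := by
  have hlin (w : Fin m → ℝ) : ∑ i, c * θ i * w i = c * ∑ i, θ i * w i := by
    rw [mul_sum]
    exact sum_congr rfl fun i _ => by ring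
  refine ⟨fun j => ?_, by rw [hlin, hθ.2, mul_zero]⟩
  rw [hlin, abs_mul, abs_of_nonneg hc, mul_left_comm]
  exact mul_le_mul_of_nonneg_left (hθ.1 j) hc

end FeasLin

theorem two_mul_sum_sq_sub_lt_mul_gBregman_of_isMinOn {m p : ℕ} {X : Fin p → Fin m → ℝ}
    {b : Fin m → ℝ} {lam lam₀ : ℝ} (hlam : 0 < lam) (hll : lam < lam₀) {θ₀ θs : Fin m → ℝ}
    (hθ₀ : θ₀ ∈ Feas m p X b lam₀) (hθ₀min : IsMinOn (g m) (Feas m p X b lam₀) θ₀)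
    (hθs : θs ∈ Feas m p X b lam) (hθsmin : IsMinOn (g m) (Feas m p X b lam) θs)
    (hne : θs ≠ θ₀) :
    2 * ∑ i, (θs i - θ₀ i) ^ 2 < m * gBregman m (fun i => lam / lam₀ * θ₀ i) θ₀ := by
  rw [Feas_eq_pi_inter_FeasLin] at hθ₀ hθ₀min hθs hθsmin
  set s := lam / lam₀
  have hlam₀ : 0 < lam₀ := hlam.trans hll
  have hs₀ : 0 < s := div_pos hlam hlam₀
  have hs₁ : s < 1 := (div_lt_one hlam₀).2 hll
  have hslam : s * lam₀ = lam := div_mul_cancel₀ lam hlam₀.ne'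
  have hθ'F : (fun i => s * θ₀ i) ∈ (univ.pi fun _ => Ioo (0 : ℝ) 1) ∩ FeasLin m p X b lam := by
    refine ⟨fun i _ => ?_, hslam ▸ smul_mem_FeasLin hs₀.le hθ₀.2⟩
    obtain ⟨h₀, h₁⟩ := hθ₀.1 i trivial
    exact ⟨mul_pos hs₀ h₀, by nlinarith⟩
  -- `θs / s` is feasible for `lam₀` up to the box constraint, which is open at `θ₀`
  have hvar : 0 ≤ ∑ i, gradg m θ₀ i * (θs i - s * θ₀ i) := by
    have hseg : segment ℝ θ₀ (fun i => s⁻¹ * θs i) ⊆ FeasLin m p X b lam₀ := by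
      refine convex_FeasLin.segment_subset hθ₀.2 ?_
      have := smul_mem_FeasLin (inv_nonneg.2 hs₀.le) hθs.2
      rwa [← hslam, inv_mul_cancel_left₀ hs₀.ne'] at this
    have := hθ₀min.hasFDerivAt_nonneg_of_segment_subset
      ((isOpen_set_pi finite_univ fun _ _ => isOpen_Ioo).mem_nhds hθ₀.1) (hasFDerivAt_g hθ₀.1) hseg
    simp only [_root_.sum_apply, smul_apply, ContinuousLinearMap.proj_apply,
      Pi.sub_apply, smul_eq_mul] at this
    have hscale : ∑ i, gradg m θ₀ i * (θs i - s * θ₀ i)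
        = s * ∑ i, gradg m θ₀ i * (s⁻¹ * θs i - θ₀ i) := by
      rw [mul_sum]
      exact sum_congr rfl fun i _ => by field_simp
    rw [hscale]
    exact mul_nonneg hs₀.le this
  calc 2 * ∑ i, (θs i - θ₀ i) ^ 2 < m * gBregman m θs θ₀ :=
        two_mul_sum_sq_sub_lt_mul_gBregman hθs.1 hθ₀.1 hne
    _ ≤ m * gBregman m (fun i => s * θ₀ i) θ₀ := by
        gcongr
        exact gBregman_le_gBregman (hθsmin hθ'F) hvar

theorem Real.sign_mul_self_eq_abs (r : ℝ) : sign r * r = |r| := by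
  rcases lt_trichotomy r 0 with h | rfl | h
  · rw [sign_of_neg h, abs_of_neg h, neg_one_mul]
  · simp
  · rw [sign_of_pos h, abs_of_pos h, one_mul]

theorem Real.sign_mul_le_abs (r x : ℝ) : sign r * x ≤ |x| := by
  rcases sign_apply_eq r with h | h | h <;> rw [h]
  · rw [neg_one_mul]; exact neg_le_abs x
  · rw [zero_mul]; exact abs_nonneg x
  · rw [one_mul]; exact le_abs_self x

theorem isCompact_setOf_sum_sq_sub_le {ι : Type*} [Fintype ι] (c : ι → ℝ) (R : ℝ) :
    IsCompact {θ : ι → ℝ | ∑ i, (θ i - c i) ^ 2 ≤ R} := by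
  refine Metric.isCompact_of_isClosed_isBounded (isClosed_le (by fun_prop) continuous_const)
    ((Metric.isBounded_closedBall (x := c) (r := √R)).subset fun θ hθ => ?_)
  rw [Metric.mem_closedBall, dist_pi_le_iff (sqrt_nonneg R)]
  intro i
  rw [Real.dist_eq]
  exact abs_le_sqrt ((single_le_sum (fun j _ => sq_nonneg (θ j - c j)) (mem_univ i)).trans hθ)

theorem slores_slater_and_attainment_general
 (m p : ℕ) (hm : 1 ≤ m)
    (X : Fin p → Fin m → ℝ) (b : Fin m → ℝ)
    (lam lam₀ : ℝ) (hlam : 0 < lam) (hll : lam < lam₀)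
    (θ₀ : Fin m → ℝ)
    (hθ₀ : θ₀ ∈ Feas m p X b lam₀ ∧ ∀ θ ∈ Feas m p X b lam₀, g m θ₀ ≤ g m θ)
    (r : ℝ)
    (hr : r = Real.sqrt (((m : ℝ) / 2) * (g m (fun i => (lam / lam₀) * θ₀ i) - g m θ₀
      + (1 - lam / lam₀) * ∑ i, gradg m θ₀ i * θ₀ i)))
    (j₀ : Fin p) (hj₀ : |∑ i, θ₀ i * X j₀ i| = (m : ℝ) * lam₀)
    (xstar : Fin m → ℝ)
    (hxstar : xstar = fun i => Real.sign (∑ k, θ₀ k * X j₀ k) * X j₀ i)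
    (A : Set (Fin m → ℝ))
    (hA : A = {θ | ∑ i, (θ i - θ₀ i) ^ 2 ≤ r ^ 2 ∧ ∑ i, θ i * b i = 0 ∧
      ∑ i, θ i * xstar i ≤ (m : ℝ) * lam})
    (θs : Fin m → ℝ)
    (hθs : θs ∈ Feas m p X b lam ∧ ∀ θ ∈ Feas m p X b lam, g m θs ≤ g m θ) :
    (θs ∈ A ∧ ∑ i, (θs i - θ₀ i) ^ 2 < r ^ 2) ∧
    (∀ v : Fin m → ℝ, ∃ θ' ∈ A, ∀ θ ∈ A, ∑ i, θ' i * v i ≤ ∑ i, θ i * v i) := by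
  obtain ⟨hθ₀F, hθ₀min⟩ := hθ₀
  obtain ⟨hθsF, hθsmin⟩ := hθs
  have hxstar_sum (θ : Fin m → ℝ) : ∑ i, θ i * xstar i
      = sign (∑ k, θ₀ k * X j₀ k) * ∑ i, θ i * X j₀ i := by
    rw [hxstar, mul_sum]
    exact sum_congr rfl fun i _ => mul_left_comm _ _ _
  have hθsx : ∑ i, θs i * xstar i ≤ m * lam :=
    (hxstar_sum θs ▸ sign_mul_le_abs _ _).trans (hθsF.2.1 j₀)
  have hne : θs ≠ θ₀ := by
    rintro rfl
    rw [hxstar_sum, sign_mul_self_eq_abs, hj₀] at hθsx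
    have : (0 : ℝ) < m := by exact_mod_cast hm
    nlinarith
  have hlt := two_mul_sum_sq_sub_lt_mul_gBregman_of_isMinOn hlam hll hθ₀F
    (isMinOn_iff.2 hθ₀min) hθsF (isMinOn_iff.2 hθsmin) hne
  have hball : ∑ i, (θs i - θ₀ i) ^ 2 < r ^ 2 := by
    have hsq : 0 ≤ ∑ i, (θs i - θ₀ i) ^ 2 := sum_nonneg fun i _ => sq_nonneg _
    rw [gBregman_smul_self] at hlt
    rw [hr, sq_sqrt] <;> linarith
  have hθsA : θs ∈ A := hA ▸ ⟨hball.le, hθsF.2.2, hθsx⟩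
  refine ⟨⟨hθsA, hball⟩, fun v => ?_⟩
  have hAc : IsCompact A := by
    rw [hA, ofPred_and, ofPred_and]
    exact (isCompact_setOf_sum_sq_sub_le θ₀ (r ^ 2)).inter_right
      ((isClosed_eq (by fun_prop) continuous_const).inter
        (isClosed_le (by fun_prop) continuous_const))
  obtain ⟨θ', hθ'A, hθ'min⟩ := hAc.exists_isMinOn (f := fun θ => ∑ i, θ i * v i) ⟨θs, hθsA⟩
    (by fun_prop)
  exact ⟨θ', hθ'A, fun θ hθ => hθ'min hθ⟩

/-- Lemma 6: (i) `θ*_λ ∈ A` and `‖θ*_λ − θ₀‖₂ < r` strictly (Slater's condition);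
(ii) for every `v`, the linear functional `θ ↦ ⟨θ, v⟩` attains its minimum over `A`. -/
theorem slores_slater_and_attainment
 (m p : ℕ) (hm : 1 ≤ m) (hp : 1 ≤ p)
    (X : Fin p → Fin m → ℝ) (b : Fin m → ℝ) (hb : ∀ i, b i = 1 ∨ b i = -1)
    (hmp : 1 ≤ mPlus m b) (hmm : 1 ≤ mMinus m b) (hlmax : 0 < lamMax m p X b)
    (lam lam₀ : ℝ) (hlam : 0 < lam) (hll : lam < lam₀) (hle : lam₀ ≤ lamMax m p X b)
    (θ₀ : Fin m → ℝ)
    (hθ₀ : θ₀ ∈ Feas m p X b lam₀ ∧ ∀ θ ∈ Feas m p X b lam₀, g m θ₀ ≤ g m θ)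
    (r : ℝ)
    (hr : r = Real.sqrt (((m : ℝ) / 2) * (g m (fun i => (lam / lam₀) * θ₀ i) - g m θ₀
      + (1 - lam / lam₀) * ∑ i, gradg m θ₀ i * θ₀ i)))
    (j₀ : Fin p) (hj₀ : |∑ i, θ₀ i * X j₀ i| = (m : ℝ) * lam₀)
    (xstar : Fin m → ℝ)
    (hxstar : xstar = fun i => Real.sign (∑ k, θ₀ k * X j₀ k) * X j₀ i)
    (A : Set (Fin m → ℝ))
    (hA : A = {θ | ∑ i, (θ i - θ₀ i) ^ 2 ≤ r ^ 2 ∧ ∑ i, θ i * b i = 0 ∧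
      ∑ i, θ i * xstar i ≤ (m : ℝ) * lam})
    (θs : Fin m → ℝ)
    (hθs : θs ∈ Feas m p X b lam ∧ ∀ θ ∈ Feas m p X b lam, g m θs ≤ g m θ) :
    (θs ∈ A ∧ ∑ i, (θs i - θ₀ i) ^ 2 < r ^ 2) ∧
    (∀ v : Fin m → ℝ, ∃ θ' ∈ A, ∀ θ ∈ A, ∑ i, θ' i * v i ≤ ∑ i, θ i * v i) :=
  slores_slater_and_attainment_general m p hm X b lam lam₀ hlam hll θ₀ hθ₀ r hr j₀ hj₀ xstar hxstar
    A hA θs hθs
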